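/- arXiv:2212.12458 — 6 statements merged into one kernel-verified Lean document; each statement's English description precedes it below -/
import Mathlib

section
/- Let K be a field, let M be an n × m matrix over K of rank exactly l, and suppose M has an invertible l × l submatrix N with row set u₁ and column set u₂. Then for any row index α ∉ u₁ and column index i ∉ u₂, the entry M(α, i) equals Σ_{β ∈ u₁, j ∈ u₂} M(α, j) · (N⁻¹)(j, β) · M(β, i). -/
/-!
The columns of `M` indexed by `c` are linearly independent, because their rows indexed by `r`
form the invertible matrix `N`; as `rank M = l`, they span the column space of `M`. Hence
`M = M[:, c] * G` for some `G`, restricting to the rows `r` gives `M[r, :] = N * G`, and so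
`M = M[:, c] * N⁻¹ * M[r, :]`.
-/

open Module Submodule

namespace Matrix

variable {R K m n p ι : Type*}

theorem exists_eq_mul_of_range_mulVecLin_le [CommSemiring R] [Fintype n] [Fintype p]
    {A : Matrix m n R} {B : Matrix m p R}
    (h : LinearMap.range A.mulVecLin ≤ LinearMap.range B.mulVecLin) :
    ∃ G : Matrix p n R, A = B * G := by
  have hcol : ∀ j, ∃ x, B *ᵥ x = A.col j := fun j =>
    h (by rw [range_mulVecLin]; exact subset_span ⟨j, rfl⟩)
  choose x hx using hcol
  refine ⟨of fun k j => x j k, ?_⟩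
  ext a j
  simpa [mulVec, dotProduct, mul_apply] using (congrFun (hx j) a).symm

variable [Field K] [Fintype n] [Fintype ι] [DecidableEq ι]

theorem range_mulVecLin_submatrix_id_eq_of_isUnit {A : Matrix m n K} {r : ι → m} {c : ι → n}
    (hrank : A.rank ≤ Fintype.card ι) (hA : IsUnit (A.submatrix r c)) :
    LinearMap.range (A.submatrix id c).mulVecLin = LinearMap.range A.mulVecLin := by
  refine eq_of_le_of_finrank_le ?_ ?_
  · simp only [range_mulVecLin]
    exact span_mono fun v ⟨j, hj⟩ => ⟨c j, hj⟩
  · calc finrank K (LinearMap.range A.mulVecLin) = A.rank := rfl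
      _ ≤ (A.submatrix r c).rank := by rwa [rank_of_isUnit _ hA]
      _ = ((A.submatrix id c).submatrix r id).rank := rfl
      _ ≤ (A.submatrix id c).rank := rank_submatrix_le _ _ _
      _ = _ := rfl

theorem eq_submatrix_mul_inv_mul_submatrix [Fintype m] {A : Matrix m n K} {r : ι → m}
    {c : ι → n} (hrank : A.rank ≤ Fintype.card ι) (hA : IsUnit (A.submatrix r c).det) :
    A = A.submatrix id c * (A.submatrix r c)⁻¹ * A.submatrix r id := by
  obtain ⟨G, hG⟩ := exists_eq_mul_of_range_mulVecLin_le
    (range_mulVecLin_submatrix_id_eq_of_isUnit hrank ((isUnit_iff_isUnit_det _).mpr hA)).ge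
  have hrows : A.submatrix r id = A.submatrix r c * G := by
    conv_lhs => rw [hG]
    ext; simp [mul_apply]
  rw [hrows, Matrix.mul_assoc, nonsing_inv_mul_cancel_left _ G hA, ← hG]

end Matrix

theorem matrix_completion_general {K : Type*} [Field K] {n m l : ℕ}
    (M : Matrix (Fin n) (Fin m) K) (hrank : M.rank = l)
    (r : Fin l → Fin n) (c : Fin l → Fin m)
    (N : Matrix (Fin l) (Fin l) K) (hN : N = M.submatrix r c)
    (hNunit : IsUnit N.det)
    (α : Fin n) (i : Fin m) :
    M α i = ∑ j : Fin l, ∑ β : Fin l, M α (c j) * N⁻¹ j β * M (r β) i := by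
  subst hN
  have hrank_le : M.rank ≤ Fintype.card (Fin l) := by rw [hrank, Fintype.card_fin]
  conv_lhs => rw [Matrix.eq_submatrix_mul_inv_mul_submatrix hrank_le hNunit]
  simp only [Matrix.mul_apply, Matrix.submatrix_apply, id, Finset.sum_mul]
  exact Finset.sum_comm

/-- Rank-`l` matrix completion identity: if `M` has rank exactly `l` and `N` is an
invertible `l × l` submatrix of `M` with rows `r` and columns `c`, then every entry
of `M` outside those rows and columns is given by bordering:
`M α i = ∑ j β, M α (c j) * N⁻¹ j β * M (r β) i`. -/
theorem matrix_completion {K : Type*} [Field K] {n m l : ℕ}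
    (M : Matrix (Fin n) (Fin m) K) (hrank : M.rank = l)
    (r : Fin l → Fin n) (c : Fin l → Fin m)
    (hr : Function.Injective r) (hc : Function.Injective c)
    (N : Matrix (Fin l) (Fin l) K) (hN : N = M.submatrix r c)
    (hNunit : IsUnit N.det)
    (α : Fin n) (i : Fin m) (hα : α ∉ Set.range r) (hi : i ∉ Set.range c) :
    M α i = ∑ j : Fin l, ∑ β : Fin l, M α (c j) * N⁻¹ j β * M (r β) i :=
  matrix_completion_general M hrank r c N hN hNunit α i
end

section
/- Let K be a field, d ≥ 1 and l ≥ 0 integers. There exists N (depending only on d and l) such that: for every finite set S and every off-diagonal tensor p : DS^d → K all of whose off-diagonal (l+1)×(l+1) subdeterminants of flattenings vanish, there exists a full tensor p̃ : S^d → K of tensor rank at most N whose restriction to DS^d equals p. -/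
/-- The tensor rank of a `d`-way tensor `t : (Fin d → S) → K`: the least number
of pure tensors summing to `t`. -/
noncomputable def tensorRank {K S : Type*} [CommSemiring K] {d : ℕ}
    (t : (Fin d → S) → K) : ℕ :=
  sInf {r | ∃ v : Fin r → Fin d → S → K, t = fun f => ∑ m, ∏ j, v m j (f j)}

/-- Insert the value `s` in position `i` of the `(d-1)`-tuple `α` to get a
`d`-tuple. -/
def combine {S : Type*} {d : ℕ} (i : Fin d) (α : {j : Fin d // j ≠ i} → S) (s : S) :
    Fin d → S := fun j => if h : j = i then s else α ⟨j, h⟩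

/-!
Induction on the order `d`. Fix a position `i` and a maximal nonsingular off-diagonal minor `M`
of the `i`-th flattening, with rows `R` and columns `C`; its size `r` is at most `l`. Bordering
`M` by any further off-diagonal row and column gives a singular matrix, so on tuples avoiding the
set `E` of entries of `R` and `C`, every column `p(·, s)` of the flattening is the combination of
the columns `p(·, C b)` with coefficients `M⁻¹ p(R, s)`. Each `p(·, C b)` is an off-diagonal
tensor of order `d - 1` satisfying the same minor condition, so by induction it has a completion
of bounded rank; this completes `p` with rank `r N(d - 1)` on tuples avoiding `E`. The
`|E| ≤ r d` exceptional elements are then added back one at a time: the tuples through a new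
element `e` are recovered from completions of the `d` slices through `e`.
-/

namespace Matrix

theorem eq_dotProduct_mulVec_of_det_fromBlocks_eq_zero {n K : Type*} [Fintype n]
    [DecidableEq n] [Field K] {M : Matrix n n K} (hM : M.det ≠ 0) {b c : n → K} {x : K}
    (h : (fromBlocks M (replicateCol (Fin 1) b) (replicateRow (Fin 1) c) (of fun _ _ => x)).det
      = 0) :
    x = c ⬝ᵥ (M⁻¹ *ᵥ b) := by
  have := M.invertibleOfIsUnitDet (isUnit_iff_ne_zero.2 hM)
  rw [det_fromBlocks₁₁, mul_eq_zero, or_iff_right hM, det_unique, Matrix.mul_assoc,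
    invOf_eq_nonsing_inv, ← replicateCol_mulVec] at h
  simpa [sub_eq_zero] using h

end Matrix

namespace OffDiagCompletion

open Finset Function Matrix

section Tuples

variable {J S : Type*}

def IsOffDiag (A : Finset S) (γ : J → S) : Prop :=
  Injective γ ∧ ∀ j, γ j ∈ A

theorem IsOffDiag.mono {A A' : Finset S} {γ : J → S} (h : IsOffDiag A γ) (hA : A ⊆ A') :
    IsOffDiag A' γ :=
  ⟨h.1, fun j => hA (h.2 j)⟩

variable [DecidableEq J]

/-- `combine` over an arbitrary index type: the slices of a tensor indexed by `J` are indexed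
by `{j // j ≠ i}`. -/
def insertAt (i : J) (α : {j : J // j ≠ i} → S) (s : S) : J → S :=
  fun j => if h : j = i then s else α ⟨j, h⟩

variable {i : J} {α : {j : J // j ≠ i} → S} {s : S}

@[simp]
theorem insertAt_self : insertAt i α s i = s :=
  dif_pos rfl

@[simp]
theorem insertAt_val (j : {j : J // j ≠ i}) : insertAt i α s j = α j :=
  dif_neg j.2

theorem insertAt_restrict (γ : J → S) : insertAt i (fun j => γ j) (γ i) = γ := by
  funext j
  by_cases h : j = i
  · subst h; simp
  · exact insertAt_val ⟨j, h⟩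

theorem isOffDiag_insertAt_iff {A : Finset S} :
    IsOffDiag A (insertAt i α s) ↔ IsOffDiag A α ∧ s ∈ A ∧ ∀ j, α j ≠ s := by
  constructor
  · rintro ⟨hinj, hA⟩
    refine ⟨⟨fun a b h => Subtype.ext (hinj (by simpa using h)),
      fun j => by simpa using hA j⟩,
      by simpa using hA i, fun j h => j.2 (hinj (by simpa using h))⟩
  · rintro ⟨⟨hinj, hA⟩, hs, hne⟩
    refine ⟨fun a b h => ?_, fun j => ?_⟩
    · by_cases ha : a = i <;> by_cases hb : b = i
      · rw [ha, hb]
      · simp [insertAt, ha, hb] at h; exact absurd h.symm (hne _)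
      · simp [insertAt, ha, hb] at h; exact absurd h (hne _)
      · simpa using congrArg Subtype.val (hinj (by simpa [insertAt, ha, hb] using h))
    · by_cases hj : j = i
      · simpa [insertAt, hj] using hs
      · simpa [insertAt, hj] using hA ⟨j, hj⟩

/-- Reads a flattening of a slice of a tensor as a flattening of the tensor itself. -/
theorem insertAt_insertAt (i' : {j : J // j ≠ i})
    (β : {j : {j : J // j ≠ i} // j ≠ i'} → S) (u e : S) :
    insertAt i (insertAt i' β u) e =
      insertAt i'.1 (fun j => if h : j.1 = i then e else
        β ⟨⟨j, h⟩, fun h' => j.2 (congrArg Subtype.val h')⟩) u := by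
  funext j
  by_cases hi : j = i
  · subst hi
    simpa [insertAt] using fun h => absurd h.symm i'.2
  · by_cases hi' : j = i'
    · subst hi'
      simpa [insertAt] using fun h => absurd h hi
    · have : (⟨j, hi⟩ : {j : J // j ≠ i}) ≠ i' := fun h => hi' (by rw [← h])
      simp [insertAt, hi, hi', this]

end Tuples

section Rank

variable {K J S : Type*} [CommSemiring K] [Fintype J]

/-- Keeping the factors supported on `A` lets completions on disjoint parts of the ground set be
added without interfering with each other. -/
def HasRankOn (A : Finset S) (t : (J → S) → K) (n : ℕ) : Prop :=
  ∃ (r : ℕ) (v : Fin r → J → S → K), r ≤ n ∧ (∀ m j, ∀ s ∉ A, v m j s = 0) ∧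
    t = fun f => ∑ m, ∏ j, v m j (f j)

variable {A A' : Finset S} {t t' : (J → S) → K} {n n' : ℕ}

theorem HasRankOn.of_le (h : HasRankOn A t n) (hn : n ≤ n') : HasRankOn A t n' :=
  let ⟨r, v, hr, hv, ht⟩ := h
  ⟨r, v, hr.trans hn, hv, ht⟩

theorem HasRankOn.of_subset (h : HasRankOn A t n) (hA : A ⊆ A') : HasRankOn A' t n :=
  let ⟨r, v, hr, hv, ht⟩ := h
  ⟨r, v, hr, fun m j s hs => hv m j s (fun h => hs (hA h)), ht⟩

theorem hasRankOn_zero : HasRankOn A (0 : (J → S) → K) 0 :=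
  ⟨0, finZeroElim, le_rfl, fun m => m.elim0, by ext; simp⟩

theorem HasRankOn.add (h : HasRankOn A t n) (h' : HasRankOn A t' n') :
    HasRankOn A (t + t') (n + n') := by
  obtain ⟨r, v, hr, hv, rfl⟩ := h
  obtain ⟨r', v', hr', hv', rfl⟩ := h'
  refine ⟨r + r', Fin.append v v', by omega, fun m j s hs => ?_, ?_⟩
  · induction m using Fin.addCases <;> simp [hv _ j s hs, hv' _ j s hs]
  · ext f
    simp [Fin.sum_univ_add]

theorem HasRankOn.sum {ι : Type*} (u : Finset ι) {t : ι → (J → S) → K}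
    (h : ∀ b ∈ u, HasRankOn A (t b) n) : HasRankOn A (∑ b ∈ u, t b) (#u * n) := by
  classical
  induction u using Finset.induction_on with
  | empty => simpa using hasRankOn_zero
  | insert b u hb ih =>
    rw [sum_insert hb, card_insert_of_notMem hb, Nat.succ_mul, add_comm (#u * n)]
    exact (h b (mem_insert_self b u)).add (ih fun c hc => h c (mem_insert_of_mem hc))

theorem HasRankOn.apply_eq_zero (h : HasRankOn A t n) {f : J → S} {j : J} (hj : f j ∉ A) :
    t f = 0 := by
  obtain ⟨r, v, -, hv, rfl⟩ := h
  exact sum_eq_zero fun m _ => prod_eq_zero (mem_univ j) (hv m j _ hj)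

theorem HasRankOn.mul_apply_at [DecidableEq J] (i : J) {q : ({j : J // j ≠ i} → S) → K}
    (h : HasRankOn A q n) {y : S → K} (hy : ∀ s ∉ A, y s = 0) :
    HasRankOn A (fun γ : J → S => q (fun j => γ j) * y (γ i)) n := by
  obtain ⟨r, v, hr, hv, rfl⟩ := h
  refine ⟨r, fun m => insertAt i (v m) y, hr, fun m j s hs => ?_, ?_⟩
  · by_cases hj : j = i
    · subst hj; simpa using hy s hs
    · simpa [insertAt, hj] using hv m ⟨j, hj⟩ s hs
  · ext γ
    simp [Fintype.prod_eq_mul_prod_subtype_ne _ i, mul_sum, mul_comm]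

theorem HasRankOn.tensorRank_le {d : ℕ} {t : (Fin d → S) → K} (h : HasRankOn A t n) :
    tensorRank t ≤ n :=
  let ⟨_, v, hr, _, ht⟩ := h
  (Nat.sInf_le ⟨v, ht⟩ : tensorRank t ≤ _).trans hr

end Rank

theorem exists_le_and_not_succ {P : ℕ → Prop} {l : ℕ} (h0 : P 0) (hl : ¬P (l + 1)) :
    ∃ r ≤ l, P r ∧ ¬P (r + 1) := by
  induction l with
  | zero => exact ⟨0, le_rfl, h0, hl⟩
  | succ l ih =>
    by_cases h : P (l + 1)
    · exact ⟨l + 1, le_rfl, h, hl⟩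
    · obtain ⟨r, hr, hPr, hPr'⟩ := ih h
      exact ⟨r, by omega, hPr, hPr'⟩

section Minors

variable {K J S : Type*} [CommRing K] [DecidableEq J] {ι : Type*} [Fintype ι] [DecidableEq ι]

def flatMinor (p : (J → S) → K) (i : J) (R : ι → {j : J // j ≠ i} → S) (C : ι → S) :
    Matrix ι ι K :=
  of fun a b => p (insertAt i (R a) (C b))

def MinorsVanishOn (A : Finset S) (p : (J → S) → K) (l : ℕ) : Prop :=
  ∀ i (R : Fin (l + 1) → {j : J // j ≠ i} → S) (C : Fin (l + 1) → S), Injective R →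
    Injective C → (∀ a b, IsOffDiag A (insertAt i (R a) (C b))) → (flatMinor p i R C).det = 0

variable {A A' : Finset S} {p : (J → S) → K} {l : ℕ}

theorem det_flatMinor_eq_zero_of_not_injective {i : J} {R : ι → {j : J // j ≠ i} → S}
    {C : ι → S} (h : ¬(Injective R ∧ Injective C)) : (flatMinor p i R C).det = 0 := by
  simp only [Injective, not_and_or, not_forall] at h
  rcases h with ⟨a, b, hab, hne⟩ | ⟨a, b, hab, hne⟩
  · exact det_zero_of_row_eq hne (by ext c; simp [flatMinor, hab])
  · exact det_zero_of_column_eq hne fun c => by simp [flatMinor, hab]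

theorem MinorsVanishOn.mono (h : MinorsVanishOn A p l) (hA : A' ⊆ A) : MinorsVanishOn A' p l :=
  fun i R C hR hC hRC => h i R C hR hC fun a b => (hRC a b).mono hA

theorem MinorsVanishOn.slice [DecidableEq S] (h : MinorsVanishOn A p l) (i : J) {e : S}
    (he : e ∈ A) :
    MinorsVanishOn (A.erase e) (fun β => p (insertAt i β e)) l := by
  intro i' R C hR hC hRC
  let R' : Fin (l + 1) → {j : J // j ≠ i'.1} → S := fun a j =>
    if h : j.1 = i then e else R a ⟨⟨j, h⟩, fun h' => j.2 (congrArg Subtype.val h')⟩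
  have hR' : Injective R' := by
    refine fun a b hab => hR (funext fun j => ?_)
    simpa [R', j.1.2] using congrFun hab ⟨j.1, fun h => j.2 (Subtype.ext h)⟩
  have key : ∀ a b, insertAt i (insertAt i' (R a) (C b)) e = insertAt i'.1 (R' a) (C b) :=
    fun a b => insertAt_insertAt i' (R a) (C b) e
  have hoff : ∀ a b, IsOffDiag A (insertAt i'.1 (R' a) (C b)) := by
    intro a b
    obtain ⟨hinj, hmem⟩ := hRC a b
    rw [← key, isOffDiag_insertAt_iff]
    exact ⟨⟨hinj, fun j => mem_of_mem_erase (hmem j)⟩, he,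
      fun j => ne_of_mem_erase (hmem j)⟩
  have hminor : flatMinor (fun β => p (insertAt i β e)) i' R C = flatMinor p i'.1 R' C :=
    Matrix.ext fun a b => congrArg p (key a b)
  rw [hminor]
  exact h i'.1 R' C hR' hC hoff

structure IsMaximalMinor (A : Finset S) (p : (J → S) → K) (i : J) {r : ℕ}
    (R : Fin r → {j : J // j ≠ i} → S) (C : Fin r → S) : Prop where
  isOffDiag : ∀ a b, IsOffDiag A (insertAt i (R a) (C b))
  det_ne_zero : (flatMinor p i R C).det ≠ 0
  det_succ_eq_zero : ∀ (R' : Fin (r + 1) → {j : J // j ≠ i} → S) (C' : Fin (r + 1) → S),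
    (∀ a b, IsOffDiag A (insertAt i (R' a) (C' b))) → (flatMinor p i R' C').det = 0

theorem MinorsVanishOn.exists_isMaximalMinor [Nontrivial K] (h : MinorsVanishOn A p l) (i : J) :
    ∃ r ≤ l, ∃ (R : Fin r → {j : J // j ≠ i} → S) (C : Fin r → S),
      IsMaximalMinor A p i R C := by
  let P n := ∃ (R : Fin n → {j : J // j ≠ i} → S) (C : Fin n → S),
    (∀ a b, IsOffDiag A (insertAt i (R a) (C b))) ∧ (flatMinor p i R C).det ≠ 0
  have h0 : P 0 := ⟨finZeroElim, finZeroElim, fun a => a.elim0, by simp⟩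
  have hl : ¬P (l + 1) := by
    rintro ⟨R, C, hRC, hdet⟩
    by_cases hinj : Injective R ∧ Injective C
    · exact hdet (h i R C hinj.1 hinj.2 hRC)
    · exact hdet (det_flatMinor_eq_zero_of_not_injective hinj)
  obtain ⟨r, hr, ⟨R, C, hRC, hdet⟩, hmax⟩ := exists_le_and_not_succ h0 hl
  exact ⟨r, hr, R, C, hRC, hdet, fun R' C' h' =>
    by_contra fun hne => hmax ⟨R', C', h', hne⟩⟩

end Minors

section MaximalMinor

variable {K J S : Type*} [Field K] [DecidableEq J] {A : Finset S} {p : (J → S) → K} {i : J}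
  {r : ℕ} {R : Fin r → {j : J // j ≠ i} → S} {C : Fin r → S}

/-- Bordering the maximal minor by the row `β` and the column `s` gives a singular matrix, so
the column `s` is a combination of the columns `C b`, with coefficients independent of `β`. -/
theorem IsMaximalMinor.apply_insertAt_eq_sum (h : IsMaximalMinor A p i R C)
    {β : {j : J // j ≠ i} → S} {s : S} (hβs : IsOffDiag A (insertAt i β s))
    (hβC : ∀ b, IsOffDiag A (insertAt i β (C b)))
    (hRs : ∀ a, IsOffDiag A (insertAt i (R a) s)) :
    p (insertAt i β s) =
      ∑ b, ((flatMinor p i R C)⁻¹ *ᵥ fun a => p (insertAt i (R a) s)) b *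
        p (insertAt i β (C b)) := by
  let R' := Sum.elim R (fun _ : Fin 1 => β)
  let C' := Sum.elim C (fun _ : Fin 1 => s)
  have hoff : ∀ a b, IsOffDiag A (insertAt i (R' a) (C' b)) := by
    rintro (a | a) (b | b)
    exacts [h.isOffDiag a b, hRs a, hβC b, hβs]
  have hdet := h.det_succ_eq_zero (R' ∘ finSumFinEquiv.symm) (C' ∘ finSumFinEquiv.symm)
    fun a b => hoff _ _
  have hblocks : flatMinor p i R' C' = fromBlocks (flatMinor p i R C)
      (replicateCol (Fin 1) fun a => p (insertAt i (R a) s))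
      (replicateRow (Fin 1) fun b => p (insertAt i β (C b)))
      (of fun _ _ => p (insertAt i β s)) := by
    ext (a | a) (b | b) <;> rfl
  rw [show flatMinor p i (R' ∘ finSumFinEquiv.symm) (C' ∘ finSumFinEquiv.symm) =
      (flatMinor p i R' C').submatrix finSumFinEquiv.symm finSumFinEquiv.symm from rfl,
    det_submatrix_equiv_self, hblocks] at hdet
  rw [eq_dotProduct_mulVec_of_det_fromBlocks_eq_zero h.det_ne_zero hdet, dotProduct_comm]
  rfl

variable [Fintype J] [DecidableEq S]

def minorSupport (i : J) (R : Fin r → {j : J // j ≠ i} → S) (C : Fin r → S) : Finset S :=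
  univ.biUnion fun a => univ.image (insertAt i (R a) (C a))

theorem card_minorSupport_le : #(minorSupport i R C) ≤ r * Fintype.card J :=
  calc #(minorSupport i R C) ≤ ∑ a, #(univ.image (insertAt i (R a) (C a))) := card_biUnion_le
    _ ≤ ∑ _a : Fin r, Fintype.card J := sum_le_sum fun a _ => card_image_le
    _ = r * Fintype.card J := by simp

theorem col_mem_minorSupport (b : Fin r) : C b ∈ minorSupport i R C :=
  mem_biUnion.2 ⟨b, mem_univ b, mem_image.2 ⟨i, mem_univ i, insertAt_self⟩⟩

theorem row_mem_minorSupport (a : Fin r) (j : {j : J // j ≠ i}) : R a j ∈ minorSupport i R C :=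
  mem_biUnion.2 ⟨a, mem_univ a, mem_image.2 ⟨j, mem_univ _, insertAt_val j⟩⟩

theorem IsMaximalMinor.minorSupport_subset (h : IsMaximalMinor A p i R C) :
    minorSupport i R C ⊆ A := by
  intro s hs
  obtain ⟨a, -, hs⟩ := mem_biUnion.1 hs
  obtain ⟨j, -, rfl⟩ := mem_image.1 hs
  exact (h.isOffDiag a a).2 j

end MaximalMinor

def OffDiagCompletable (K : Type*) [CommRing K] (l d N : ℕ) : Prop :=
  ∀ (J S : Type) [Fintype J] [DecidableEq J] [DecidableEq S], Fintype.card J = d →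
    ∀ (A : Finset S) (p : (J → S) → K), MinorsVanishOn A p l →
      ∃ pt : (J → S) → K, HasRankOn A pt N ∧ ∀ γ, IsOffDiag A γ → pt γ = p γ

section Completion

variable {K : Type*} [Field K] {J S : Type} [Fintype J] [DecidableEq J] [DecidableEq S]
  {A : Finset S} {p : (J → S) → K} {l N n : ℕ}

theorem OffDiagCompletable.slice (hN : OffDiagCompletable K l (Fintype.card J - 1) N)
    (hH : MinorsVanishOn A p l) (i : J) {e : S} (he : e ∈ A) {B : Finset S}
    (hB : B ⊆ A.erase e) :
    ∃ q, HasRankOn B q N ∧ ∀ β, IsOffDiag B β → q β = p (insertAt i β e) :=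
  hN _ S (by simp [Fintype.card_subtype_compl]) B _ ((hH.slice i he).mono hB)

theorem IsMaximalMinor.exists_completion_sdiff {i : J} {r : ℕ}
    {R : Fin r → {j : J // j ≠ i} → S} {C : Fin r → S}
    (hN : OffDiagCompletable K l (Fintype.card J - 1) N) (hH : MinorsVanishOn A p l)
    (h : IsMaximalMinor A p i R C) :
    ∃ pt, HasRankOn (A \ minorSupport i R C) pt (r * N) ∧
      ∀ γ, IsOffDiag (A \ minorSupport i R C) γ → pt γ = p γ := by
  set E := minorSupport i R C
  choose q hq hpq using fun b => hN.slice hH i (h.minorSupport_subset (col_mem_minorSupport b))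
    (B := A \ E) fun s hs => mem_erase.2
      ⟨fun hsC => (mem_sdiff.1 hs).2 (hsC ▸ col_mem_minorSupport b), (mem_sdiff.1 hs).1⟩
  let x s := (flatMinor p i R C)⁻¹ *ᵥ fun a => p (insertAt i (R a) s)
  let y : Fin r → S → K := fun b s => if s ∈ A \ E then x s b else 0
  refine ⟨∑ b, fun γ => q b (fun j => γ j) * y b (γ i), ?_, fun γ hγ => ?_⟩
  · simpa using HasRankOn.sum univ fun b _ =>
      (hq b).mul_apply_at i (y := y b) fun s hs => if_neg hs
  set β : {j : J // j ≠ i} → S := fun j => γ j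
  have hγ' : IsOffDiag (A \ E) (insertAt i β (γ i)) := by rwa [insertAt_restrict]
  obtain ⟨hβ, hγi, -⟩ := isOffDiag_insertAt_iff.1 hγ'
  have hsub : A \ E ⊆ A := sdiff_subset
  have hspan := h.apply_insertAt_eq_sum (hγ'.mono hsub)
    (fun b => isOffDiag_insertAt_iff.2 ⟨hβ.mono hsub,
      h.minorSupport_subset (col_mem_minorSupport b),
      fun j hj => (mem_sdiff.1 (hβ.2 j)).2 (hj ▸ col_mem_minorSupport b)⟩)
    (fun a => isOffDiag_insertAt_iff.2 ⟨(isOffDiag_insertAt_iff.1 (h.isOffDiag a a)).1,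
      hsub hγi, fun j hj => (mem_sdiff.1 hγi).2 (hj ▸ row_mem_minorSupport a j)⟩)
  rw [insertAt_restrict] at hspan
  rw [Finset.sum_apply, hspan]
  refine sum_congr rfl fun b _ => ?_
  rw [hpq b β hβ, mul_comm]
  exact congrArg (· * _) (if_pos hγi)

/-- A tuple containing `e` is recovered from the completion of the slice through `e` at the
position of `e`, which is unique by injectivity. -/
theorem OffDiagCompletable.exists_completion_insert
    (hN : OffDiagCompletable K l (Fintype.card J - 1) N) (hH : MinorsVanishOn A p l)
    {B : Finset S} {e : S} (hBe : insert e B ⊆ A) (heB : e ∉ B) {pt : (J → S) → K}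
    (hpt : HasRankOn B pt n) (hptp : ∀ γ, IsOffDiag B γ → pt γ = p γ) :
    ∃ pt', HasRankOn (insert e B) pt' (n + Fintype.card J * N) ∧
      ∀ γ, IsOffDiag (insert e B) γ → pt' γ = p γ := by
  choose q hq hpq using fun j => hN.slice hH j (hBe (mem_insert_self e B)) (B := B)
    (subset_erase.2 ⟨(subset_insert e B).trans hBe, heB⟩)
  let δ : S → K := fun s => if s = e then 1 else 0
  refine ⟨pt + ∑ j, fun γ => q j (fun k => γ k) * δ (γ j), ?_, fun γ hγ => ?_⟩
  · have hδ : ∀ s ∉ insert e B, δ s = 0 := fun s hs =>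
      if_neg fun h : s = e => hs (h ▸ mem_insert_self e B)
    simpa using (hpt.of_subset (subset_insert e B)).add <| HasRankOn.sum univ fun j _ =>
      ((hq j).of_subset (subset_insert e B)).mul_apply_at j hδ
  simp only [Pi.add_apply, Finset.sum_apply]
  by_cases hγe : ∃ j, γ j = e
  · obtain ⟨j, hj⟩ := hγe
    have hγB : IsOffDiag B fun k : {k // k ≠ j} => γ k :=
      ⟨fun a b hab => Subtype.ext (hγ.1 hab), fun k => (mem_insert.1 (hγ.2 k)).resolve_left
        fun h => k.2 (hγ.1 (h.trans hj.symm))⟩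
    rw [hpt.apply_eq_zero (j := j) (hj ▸ heB), zero_add, sum_eq_single j, hpq j _ hγB, ← hj,
      insertAt_restrict]
    · simp [δ, hj]
    · intro k _ hk
      have hke : γ k ≠ e := fun h => hk (hγ.1 (h.trans hj.symm))
      simp [δ, hke]
    · simp
  · rw [not_exists] at hγe
    have hγB : IsOffDiag B γ :=
      ⟨hγ.1, fun k => (mem_insert.1 (hγ.2 k)).resolve_left (hγe k)⟩
    simp [hptp γ hγB, δ, hγe]

theorem OffDiagCompletable.exists_completion_union
    (hN : OffDiagCompletable K l (Fintype.card J - 1) N) (hH : MinorsVanishOn A p l)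
    {B : Finset S} {pt : (J → S) → K} (hpt : HasRankOn B pt n)
    (hptp : ∀ γ, IsOffDiag B γ → pt γ = p γ) (G : Finset S) (hBG : B ∪ G ⊆ A)
    (hdisj : Disjoint B G) :
    ∃ pt', HasRankOn (B ∪ G) pt' (n + #G * (Fintype.card J * N)) ∧
      ∀ γ, IsOffDiag (B ∪ G) γ → pt' γ = p γ := by
  induction G using Finset.induction_on with
  | empty => exact ⟨pt, by simpa using hpt, by simpa using hptp⟩
  | insert e G heG ih =>
    rw [union_insert] at hBG ⊢
    obtain ⟨pt', hpt', hpt'p⟩ := ih ((subset_insert e _).trans hBG)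
      (disjoint_of_subset_right (subset_insert e G) hdisj)
    have heBG : e ∉ B ∪ G := by
      simpa [heG] using disjoint_right.1 hdisj (mem_insert_self e G)
    obtain ⟨pt'', hpt'', hpt''p⟩ := hN.exists_completion_insert hH hBG heBG hpt' hpt'p
    refine ⟨pt'', hpt''.of_le ?_, hpt''p⟩
    rw [card_insert_of_notMem heG]
    nlinarith

end Completion

section Induction

variable {K : Type*} [Field K] {l : ℕ}

theorem offDiagCompletable_one : OffDiagCompletable K l 1 1 := by
  intro J S _ _ _ hJ A p _
  obtain ⟨j₀, hj₀⟩ := Fintype.card_eq_one_iff.1 hJ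
  let v : S → K := fun s => if s ∈ A then p fun _ => s else 0
  refine ⟨fun γ => v (γ j₀), ⟨1, fun _ _ => v, le_rfl, fun _ _ s hs => if_neg hs, ?_⟩,
    fun γ hγ => ?_⟩
  · ext γ
    simp [Fintype.prod_eq_single j₀ fun j hj => absurd (hj₀ j) hj]
  · simp only [v, if_pos (hγ.2 j₀)]
    congr 1
    funext j
    rw [hj₀ j]

theorem OffDiagCompletable.succ {d N : ℕ} (h : OffDiagCompletable K l (d + 1) N) :
    OffDiagCompletable K l (d + 2) (l * (1 + (d + 2) ^ 2) * N) := by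
  intro J S _ _ _ hJ A p hH
  have hN : OffDiagCompletable K l (Fintype.card J - 1) N := by rwa [hJ]
  obtain ⟨i⟩ : Nonempty J := Fintype.card_pos_iff.1 (by omega)
  obtain ⟨r, hr, R, C, hmax⟩ := hH.exists_isMaximalMinor i
  obtain ⟨pt, hpt, hptp⟩ := hmax.exists_completion_sdiff hN hH
  obtain ⟨pt', hpt', hpt'p⟩ := hN.exists_completion_union hH hpt hptp (minorSupport i R C)
    (union_subset sdiff_subset hmax.minorSupport_subset) disjoint_sdiff_self_left
  rw [sdiff_union_of_subset hmax.minorSupport_subset] at hpt' hpt'p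
  refine ⟨pt', hpt'.of_le ?_, hpt'p⟩
  have hE : #(minorSupport i R C) ≤ l * (d + 2) :=
    card_minorSupport_le.trans (by rw [hJ]; gcongr)
  calc r * N + #(minorSupport i R C) * (Fintype.card J * N)
      ≤ l * N + l * (d + 2) * ((d + 2) * N) := by rw [hJ]; gcongr
    _ = l * (1 + (d + 2) ^ 2) * N := by ring

/-- `completionRankBound l d` bounds the rank needed for tensors of order `d + 1`. -/
def completionRankBound (l : ℕ) : ℕ → ℕ
  | 0 => 1
  | d + 1 => l * (1 + (d + 2) ^ 2) * completionRankBound l d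

theorem offDiagCompletable (d : ℕ) :
    OffDiagCompletable K l (d + 1) (completionRankBound l d) := by
  induction d with
  | zero => exact offDiagCompletable_one
  | succ d ih => exact ih.succ

end Induction

end OffDiagCompletion

open OffDiagCompletion in
/-- Tensor completion: for fixed `d ≥ 1` and `l` there exists `N` such that every
off-diagonal tensor `p : DS^d → K` all of whose off-diagonal
`(l+1)×(l+1)` subdeterminants of flattenings vanish can be completed to a full
tensor `p̃ : S^d → K` of tensor rank at most `N`. -/
theorem offDiag_tensor_completion (K : Type) [Field K] (d l : ℕ) (hd : 1 ≤ d) :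
    ∃ N : ℕ, ∀ (S : Type) [Fintype S] [DecidableEq S],
      ∀ p : {α : Fin d → S // Function.Injective α} → K,
      (∀ (i : Fin d) (rows : Fin (l + 1) → ({j : Fin d // j ≠ i} → S))
          (cols : Fin (l + 1) → S),
          Function.Injective rows → Function.Injective cols →
          ∀ hinj : ∀ a b, Function.Injective (combine i (rows a) (cols b)),
          (Matrix.of fun a b => p ⟨combine i (rows a) (cols b), hinj a b⟩).det = 0) →
      ∃ pt : (Fin d → S) → K, tensorRank pt ≤ N ∧
        ∀ (α : Fin d → S) (h : Function.Injective α), pt α = p ⟨α, h⟩ := by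
  obtain ⟨d, rfl⟩ := Nat.exists_eq_add_of_le' hd
  refine ⟨completionRankBound l d, fun S _ _ p hp => ?_⟩
  let p' : (Fin (d + 1) → S) → K := fun γ => if h : Function.Injective γ then p ⟨γ, h⟩ else 0
  have hH : MinorsVanishOn Finset.univ p' l := fun i R C hR hC hRC => by
    have hminor : flatMinor p' i R C =
        Matrix.of fun a b => p ⟨combine i (R a) (C b), (hRC a b).1⟩ :=
      Matrix.ext fun a b => dif_pos (hRC a b).1
    rw [hminor]
    exact hp i R C hR hC fun a b => (hRC a b).1
  obtain ⟨pt, hpt, hptp⟩ :=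
    offDiagCompletable d (Fin (d + 1)) S (Fintype.card_fin _) Finset.univ p' hH
  exact ⟨pt, hpt.tensorRank_le, fun α h => by simpa [p', h] using hptp α ⟨h, by simp⟩⟩
end

section
/- Let K be a commutative ring, d a nonnegative integer, and T₀ a finite set. For every finite set T there is a K-algebra isomorphism, natural in T with respect to injections, between K[y_α : α an injective map [d] → T₀ ⊔ T] and the tensor product over e = 0,…,d of (K[y_β : β an injective map [e] → T])^{⊗ m_e}, where m_e = (d choose e) · |T₀| · (|T₀|−1) ⋯ (|T₀|−(d−e)+1) counts ways to place d−e of the d index positions into T₀ injectively. -/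
/-!
An injection `α : [d] → T₀ ⊔ T` is the same as the set `S` of positions that `α` sends into `T`,
an injection `Sᶜ → T₀` and an injection `S → T`; enumerating `S` increasingly turns the last one
into an injection `[|S|] → T`. Grouping by `e = |S|`, the pairs `(S, Sᶜ ↪ T₀)` with `|S| = e`
number exactly `m_e`, and an injection `T → T'` only acts on the component `[e] ↪ T`. Renaming
variables along this bijection gives the isomorphism, natural because the bijection is.
-/

open Function

/-- The multiplicity `m_e = (d choose e) · |T₀|·(|T₀|−1)⋯(|T₀|−(d−e)+1)`:
the number of ways of filling `d − e` of the `d` index positions injectively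
with elements of `T₀`. -/
def multFactor (d e t₀ : ℕ) : ℕ := Nat.choose d e * Nat.descFactorial t₀ (d - e)

section Injections

variable {ι κ A B : Type*}

def injectivePostcomp {σ : A → B} (hσ : Injective σ) :
    {f : ι → A // Injective f} → {f : ι → B // Injective f} :=
  fun f => ⟨σ ∘ f, hσ.comp f.2⟩

def injectiveArrowCongrLeft (e : ι ≃ κ) :
    {f : ι → A // Injective f} ≃ {f : κ → A // Injective f} :=
  (e.arrowCongr (Equiv.refl A)).subtypeEquiv fun f => (Equiv.injective_comp e.symm f).symm

end Injections

section SumSplit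

variable {X Y Z Z' : Type*}

abbrev SumSplit (X Y Z : Type*) : Type _ :=
  Σ S : Finset X, {g : {x // x ∉ S} → Y // Injective g} × {h : S → Z // Injective h}

lemma SumSplit.ext {S S' : Finset X} (hS : S = S')
    {g : {g : {x // x ∉ S} → Y // Injective g}} {g' : {g : {x // x ∉ S'} → Y // Injective g}}
    {h : {h : S → Z // Injective h}} {h' : {h : S' → Z // Injective h}}
    (hg : ∀ x hx hx', g.1 ⟨x, hx⟩ = g'.1 ⟨x, hx'⟩) (hh : ∀ x hx hx', h.1 ⟨x, hx⟩ = h'.1 ⟨x, hx'⟩) :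
    (⟨S, g, h⟩ : SumSplit X Y Z) = ⟨S', g', h'⟩ := by
  subst hS
  obtain rfl : g = g' := Subtype.ext (funext fun x => hg x.1 x.2 x.2)
  obtain rfl : h = h' := Subtype.ext (funext fun x => hh x.1 x.2 x.2)
  rfl

variable [DecidableEq X]

def sumGlue (S : Finset X) (g : {x // x ∉ S} → Y) (h : S → Z) (x : X) : Y ⊕ Z :=
  if hx : x ∈ S then .inr (h ⟨x, hx⟩) else .inl (g ⟨x, hx⟩)

lemma sumGlue_injective {S : Finset X} {g : {x // x ∉ S} → Y} {h : S → Z}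
    (hg : Injective g) (hh : Injective h) : Injective (sumGlue S g h) := by
  intro x y hxy
  unfold sumGlue at hxy
  split_ifs at hxy with hx hy hy
  · exact congrArg Subtype.val (hh (Sum.inr_injective hxy))
  · exact congrArg Subtype.val (hg (Sum.inl_injective hxy))

lemma sumGlue_map_right (S : Finset X) (g : {x // x ∉ S} → Y) (h : S → Z) (σ : Z → Z') :
    sumGlue S g (σ ∘ h) = Sum.map id σ ∘ sumGlue S g h := by
  funext x
  by_cases hx : x ∈ S <;> simp [sumGlue, hx]

variable [Fintype X]

lemma filter_isRight_sumGlue (S : Finset X) (g : {x // x ∉ S} → Y) (h : S → Z) :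
    Finset.univ.filter (fun x => (sumGlue S g h x).isRight) = S := by
  ext x
  rw [Finset.mem_filter_univ, sumGlue]
  split_ifs <;> simp [*]

def sumSplit (α : {α : X → Y ⊕ Z // Injective α}) : SumSplit X Y Z :=
  let S := Finset.univ.filter fun x => (α.1 x).isRight
  have isLeft {x} (hx : x ∉ S) : (α.1 x).isLeft := by simpa [S] using hx
  have isRight {x} (hx : x ∈ S) : (α.1 x).isRight := by simpa [S] using hx
  ⟨S, ⟨fun x => (α.1 x).getLeft (isLeft x.2), fun x y hxy => Subtype.ext <| α.2 <| by
      rw [← Sum.inl_getLeft _ (isLeft x.2), ← Sum.inl_getLeft _ (isLeft y.2)]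
      exact congrArg Sum.inl hxy⟩,
    ⟨fun x => (α.1 x).getRight (isRight x.2), fun x y hxy => Subtype.ext <| α.2 <| by
      rw [← Sum.inr_getRight _ (isRight x.2), ← Sum.inr_getRight _ (isRight y.2)]
      exact congrArg Sum.inr hxy⟩⟩

def injectiveSumEquiv : {α : X → Y ⊕ Z // Injective α} ≃ SumSplit X Y Z where
  toFun := sumSplit
  invFun s := ⟨sumGlue s.1 s.2.1.1 s.2.2.1, sumGlue_injective s.2.1.2 s.2.2.2⟩
  left_inv α := by
    refine Subtype.ext (funext fun x => ?_)
    by_cases hx : (α.1 x).isRight <;> simp [sumGlue, sumSplit, hx]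
  right_inv := by
    rintro ⟨S, g, h⟩
    refine SumSplit.ext (filter_isRight_sumGlue S g.1 h.1) (fun x _ hx => ?_) (fun x _ hx => ?_) <;>
      simp [sumGlue, hx]

lemma injectiveSumEquiv_symm_postcomp {σ : Z → Z'} (hσ : Injective σ) (s : SumSplit X Y Z) :
    injectiveSumEquiv.symm (⟨s.1, s.2.1, injectivePostcomp hσ s.2.2⟩ : SumSplit X Y Z') =
      injectivePostcomp (injective_id.sumMap hσ) (injectiveSumEquiv.symm s) :=
  Subtype.ext (sumGlue_map_right _ _ _ σ)

lemma injectiveSumEquiv_postcomp {σ : Z → Z'} (hσ : Injective σ)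
    (α : {α : X → Y ⊕ Z // Injective α}) :
    injectiveSumEquiv (injectivePostcomp (injective_id.sumMap hσ) α) =
      let s := injectiveSumEquiv α
      (⟨s.1, s.2.1, injectivePostcomp hσ s.2.2⟩ : SumSplit X Y Z') := by
  rw [← Equiv.eq_symm_apply, injectiveSumEquiv_symm_postcomp, Equiv.symm_apply_apply]

end SumSplit

section GradeByCard

variable {X : Type*} [Fintype X]

def sigmaGradeByCard {n : ℕ} (hX : Fintype.card X ≤ n) {A : Finset X → Type*} {B : ℕ → Type*} :
    (Σ S : Finset X, A S × B S.card) ≃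
      Σ e : Fin (n + 1), (Σ S : {S : Finset X // S.card = e}, A S.1) × B e where
  toFun s := ⟨⟨s.1.card, Nat.lt_succ_of_le ((Finset.card_le_univ _).trans hX)⟩,
    ⟨⟨s.1, rfl⟩, s.2.1⟩, s.2.2⟩
  invFun | ⟨_, ⟨⟨S, hS⟩, a⟩, b⟩ => ⟨S, a, hS ▸ b⟩
  left_inv _ := rfl
  right_inv := by
    rintro ⟨⟨k, hk⟩, ⟨⟨S, hS : S.card = k⟩, a⟩, b⟩
    subst hS
    rfl

lemma card_sigma_injective_compl (Y : Type*) [Fintype Y] (e : ℕ) :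
    Nat.card (Σ S : {S : Finset X // S.card = e}, {g : {x // x ∉ S.1} → Y // Injective g}) =
      (Fintype.card X).choose e * (Fintype.card Y).descFactorial (Fintype.card X - e) := by
  classical
  have card_fiber (S : {S : Finset X // S.card = e}) :
      Fintype.card {g : {x // x ∉ S.1} → Y // Injective g} =
        (Fintype.card Y).descFactorial (Fintype.card X - e) := by
    rw [Fintype.card_congr (Equiv.subtypeInjectiveEquivEmbedding _ _), Fintype.card_embedding_eq,
      Fintype.card_subtype_compl, Fintype.card_coe, S.2]
  rw [Nat.card_eq_fintype_card, Fintype.card_sigma]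
  simp only [card_fiber, Finset.sum_const, smul_eq_mul, Finset.card_univ, Fintype.card_finset_len]

end GradeByCard

noncomputable def complInjectionsEquivFin (d e : ℕ) (Y : Type*) [Fintype Y] :
    (Σ S : {S : Finset (Fin d) // S.card = e}, {g : {x // x ∉ S.1} → Y // Injective g}) ≃
      Fin (multFactor d e (Fintype.card Y)) :=
  (Finite.equivFin _).trans
    (finCongr (by rw [card_sigma_injective_compl, Fintype.card_fin, multFactor]))

noncomputable def shiftVarEquiv (d : ℕ) (T₀ T : Type*) [Fintype T₀] :
    {α : Fin d → T₀ ⊕ T // Injective α} ≃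
      Σ e : Fin (d + 1), Fin (multFactor d e (Fintype.card T₀)) × {β : Fin e → T // Injective β} :=
  injectiveSumEquiv.trans <|
    (Equiv.sigmaCongrRight fun S => (Equiv.refl _).prodCongr
      (injectiveArrowCongrLeft (S.orderIsoOfFin rfl).symm.toEquiv)).trans <|
    (sigmaGradeByCard (Fintype.card_fin d).le (A := fun S => {g : {x // x ∉ S} → T₀ // Injective g})
      (B := fun k => {β : Fin k → T // Injective β})).trans <|
    Equiv.sigmaCongrRight fun e => (complInjectionsEquivFin d e T₀).prodCongr (Equiv.refl _)

lemma shiftVarEquiv_postcomp {d : ℕ} {T₀ T T' : Type*} [Fintype T₀] {σ : T → T'}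
    (hσ : Injective σ) (α : {α : Fin d → T₀ ⊕ T // Injective α}) :
    shiftVarEquiv d T₀ T' (injectivePostcomp (injective_id.sumMap hσ) α) =
      let v := shiftVarEquiv d T₀ T α
      ⟨v.1, v.2.1, injectivePostcomp hσ v.2.2⟩ := by
  simp only [shiftVarEquiv, Equiv.trans_apply]
  rw [injectiveSumEquiv_postcomp hσ]
  -- the enumeration of `S`, the grading and the relabelling of copies commute with `σ ∘ ·` by `rfl`
  rfl

/-- The tensor product `⨂_e (K[y_β])^{⊗ m_e}` is realized as the polynomial ring on the disjoint
union of the variable sets, indexed by triples `(e, copy ∈ [m_e], β injective [e] → T)`. -/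
theorem shift_Bd_iso_general (K : Type) [CommRing K] (d : ℕ)
    (T₀ : Type) [Fintype T₀] :
    ∃ iso : ∀ (T : Type) [Fintype T] [DecidableEq T],
      MvPolynomial {α : Fin d → T₀ ⊕ T // Function.Injective α} K ≃ₐ[K]
        MvPolynomial (Σ e : Fin (d + 1),
          Fin (multFactor d e (Fintype.card T₀)) ×
            {β : Fin (e : ℕ) → T // Function.Injective β}) K,
      ∀ (T T' : Type) [Fintype T] [DecidableEq T] [Fintype T'] [DecidableEq T']
        (σ : T → T') (hσ : Function.Injective σ),
        (iso T').toAlgHom.comp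
            (MvPolynomial.rename fun α : {α : Fin d → T₀ ⊕ T // Function.Injective α} =>
              (⟨Sum.map id σ ∘ α.1, (Function.injective_id.sumMap hσ).comp α.2⟩ :
                {α : Fin d → T₀ ⊕ T' // Function.Injective α})) =
          (MvPolynomial.rename fun v : Σ e : Fin (d + 1),
              Fin (multFactor d e (Fintype.card T₀)) ×
                {β : Fin (e : ℕ) → T // Function.Injective β} =>
            (⟨v.1, v.2.1, ⟨σ ∘ v.2.2.1, hσ.comp v.2.2.2⟩⟩ :
              Σ e : Fin (d + 1),
                Fin (multFactor d e (Fintype.card T₀)) ×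
                  {β : Fin (e : ℕ) → T' // Function.Injective β})).comp
            (iso T).toAlgHom := by
  refine ⟨fun T _ _ => MvPolynomial.renameEquiv K (shiftVarEquiv d T₀ T),
    fun T T' _ _ _ _ σ hσ => ?_⟩
  change (MvPolynomial.rename _).comp (MvPolynomial.rename _) =
    (MvPolynomial.rename _).comp (MvPolynomial.rename _)
  rw [MvPolynomial.rename_comp_rename, MvPolynomial.rename_comp_rename]
  exact congrArg _ (funext (shiftVarEquiv_postcomp hσ))

/-- Shift isomorphism: for a fixed finite set `T₀`, there is a `K`-algebra
isomorphism, natural in the finite set `T` with respect to injections, between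
`K[y_α : α injective [d] → T₀ ⊔ T]` and the tensor product
`⨂_{e=0}^{d} (K[y_β : β injective [e] → T])^{⊗ m_e}` — the latter realized
canonically as the polynomial ring on the disjoint union of the variable sets,
indexed by triples `(e, copy ∈ [m_e], β injective [e] → T)`. -/
theorem shift_Bd_iso (K : Type) [CommRing K] (d : ℕ)
    (T₀ : Type) [Fintype T₀] [DecidableEq T₀] :
    ∃ iso : ∀ (T : Type) [Fintype T] [DecidableEq T],
      MvPolynomial {α : Fin d → T₀ ⊕ T // Function.Injective α} K ≃ₐ[K]
        MvPolynomial (Σ e : Fin (d + 1),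
          Fin (multFactor d e (Fintype.card T₀)) ×
            {β : Fin (e : ℕ) → T // Function.Injective β}) K,
      ∀ (T T' : Type) [Fintype T] [DecidableEq T] [Fintype T'] [DecidableEq T']
        (σ : T → T') (hσ : Function.Injective σ),
        (iso T').toAlgHom.comp
            (MvPolynomial.rename fun α : {α : Fin d → T₀ ⊕ T // Function.Injective α} =>
              (⟨Sum.map id σ ∘ α.1, (Function.injective_id.sumMap hσ).comp α.2⟩ :
                {α : Fin d → T₀ ⊕ T' // Function.Injective α})) =
          (MvPolynomial.rename fun v : Σ e : Fin (d + 1),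
              Fin (multFactor d e (Fintype.card T₀)) ×
                {β : Fin (e : ℕ) → T // Function.Injective β} =>
            (⟨v.1, v.2.1, ⟨σ ∘ v.2.2.1, hσ.comp v.2.2.2⟩⟩ :
              Σ e : Fin (d + 1),
                Fin (multFactor d e (Fintype.card T₀)) ×
                  {β : Fin (e : ℕ) → T' // Function.Injective β})).comp
            (iso T).toAlgHom :=
  shift_Bd_iso_general K d T₀
end

section
/- Let K be a commutative ring and let A, C be FI-algebras over K. If A is generated by finitely many elements of width at most d and C is generated by finitely many elements of width at most d', then the FI-algebra S ↦ A(S) ⊗_K C(S) is generated by finitely many elements of width at most max(d, d'). -/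
/-- An FI-algebra over `K`: a functor from finite sets with injections to
commutative `K`-algebras. -/
structure FIAlgebra (K : Type) [CommRing K] : Type 1 where
  obj : ∀ (S : Type) [Fintype S], Type
  [commRing : ∀ (S : Type) [Fintype S], CommRing (obj S)]
  [algebra : ∀ (S : Type) [Fintype S], Algebra K (obj S)]
  map : ∀ {S T : Type} [Fintype S] [Fintype T] {σ : S → T},
      Function.Injective σ → (obj S →ₐ[K] obj T)
  map_id : ∀ (S : Type) [Fintype S],
      map (Function.injective_id (α := S)) = AlgHom.id K (obj S)
  map_comp : ∀ {S T U : Type} [Fintype S] [Fintype T] [Fintype U]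
      {σ : S → T} {τ : T → U} (hσ : Function.Injective σ) (hτ : Function.Injective τ),
      map (hτ.comp hσ) = (map hτ).comp (map hσ)

attribute [instance] FIAlgebra.commRing FIAlgebra.algebra

variable {K : Type} [CommRing K]

/-- A sub-FI-algebra of an FI-algebra `A`. -/
structure FISubalgebra (A : FIAlgebra K) : Type 1 where
  carrier : ∀ (S : Type) [Fintype S], Subalgebra K (A.obj S)
  map_mem : ∀ {S T : Type} [Fintype S] [Fintype T] {σ : S → T}
      (hσ : Function.Injective σ) {x : A.obj S},
      x ∈ carrier S → A.map hσ x ∈ carrier T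

/-- An element of an FI-algebra: an element of `A(S)` for some finite set `S`. -/
structure FIElem (A : FIAlgebra K) : Type 1 where
  S : Type
  [fin : Fintype S]
  x : A.obj S

attribute [instance] FIElem.fin

/-- A set `D` of elements generates the FI-algebra `A` if no proper sub-FI-algebra
contains `D`. -/
def Generates (A : FIAlgebra K) (D : Set (FIElem A)) : Prop :=
  ∀ P : FISubalgebra A, (∀ e ∈ D, e.x ∈ P.carrier e.S) →
    ∀ (S : Type) [Fintype S], ∀ x : A.obj S, x ∈ P.carrier S

/-- An element of an FI-algebra has width at most `d` if it is the image of an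
element of `A([n])` for some `n ≤ d` under a map induced by an injection. -/
def WidthLE (A : FIAlgebra K) (e : FIElem A) (d : ℕ) : Prop :=
  ∃ (n : ℕ), n ≤ d ∧ ∃ (π : Fin n → e.S) (hπ : Function.Injective π),
    e.x ∈ (A.map hπ).range

/-- The tensor product of two FI-algebras, `S ↦ A(S) ⊗_K C(S)`. -/
noncomputable def FIAlgebra.tensor (A C : FIAlgebra K) : FIAlgebra K where
  obj S _ := TensorProduct K (A.obj S) (C.obj S)
  commRing := fun _ _ => inferInstance
  algebra := fun _ _ => inferInstance
  map {S T} _ _ {σ} hσ := Algebra.TensorProduct.map (A.map hσ) (C.map hσ)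
  map_id S _ := by beta_reduce; rw [A.map_id, C.map_id, Algebra.TensorProduct.map_id]
  map_comp {S T U} _ _ _ {σ} {τ} hσ hτ := by
    beta_reduce
    rw [A.map_comp hσ hτ, C.map_comp hσ hτ, Algebra.TensorProduct.map_comp]

/-
Proof idea: the natural inclusions `a ↦ a ⊗ 1` and `c ↦ 1 ⊗ c` preserve width, so the images
of the two generating sets have width at most `max d d'`. A sub-FI-algebra `P` of `A ⊗ C`
containing them pulls back along each inclusion to a sub-FI-algebra of `A` (resp. `C`)
containing its generators, hence contains every `a ⊗ 1` and `1 ⊗ c`, and therefore every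
`a ⊗ c = (a ⊗ 1) * (1 ⊗ c)`.
-/

structure FIAlgHom (A B : FIAlgebra K) : Type 1 where
  app : ∀ (S : Type) [Fintype S], A.obj S →ₐ[K] B.obj S
  naturality : ∀ {S T : Type} [Fintype S] [Fintype T] {σ : S → T}
      (hσ : Function.Injective σ) (x : A.obj S), app T (A.map hσ x) = B.map hσ (app S x)

theorem WidthLE.mono {A : FIAlgebra K} {e : FIElem A} {d d' : ℕ} (h : WidthLE A e d)
    (hd : d ≤ d') : WidthLE A e d' :=
  let ⟨n, hn, hx⟩ := h
  ⟨n, hn.trans hd, hx⟩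

namespace FIAlgHom

variable {A B : FIAlgebra K}

def mapElem (f : FIAlgHom A B) (e : FIElem A) : FIElem B := ⟨e.S, f.app e.S e.x⟩

theorem widthLE_mapElem (f : FIAlgHom A B) {e : FIElem A} {d : ℕ} (he : WidthLE A e d) :
    WidthLE B (f.mapElem e) d := by
  obtain ⟨n, hn, π, hπ, y, hy⟩ := he
  exact ⟨n, hn, π, hπ, f.app _ y, (f.naturality hπ y).symm.trans (congrArg (f.app e.S) hy)⟩

end FIAlgHom

namespace FISubalgebra

variable {A B : FIAlgebra K}

def comap (P : FISubalgebra B) (f : FIAlgHom A B) : FISubalgebra A where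
  carrier S _ := (P.carrier S).comap (f.app S)
  map_mem hσ x hx := by
    rw [Subalgebra.mem_comap, f.naturality]
    exact P.map_mem hσ hx

end FISubalgebra

theorem Generates.app_mem {A B : FIAlgebra K} {D : Set (FIElem A)} (hD : Generates A D)
    (f : FIAlgHom A B) (P : FISubalgebra B) (hP : ∀ e ∈ D, (f.mapElem e).x ∈ P.carrier e.S)
    (S : Type) [Fintype S] (x : A.obj S) : f.app S x ∈ P.carrier S :=
  hD (P.comap f) hP S x

namespace FIAlgebra

variable (A C : FIAlgebra K)

theorem tensor_map_tmul {S T : Type} [Fintype S] [Fintype T] {σ : S → T}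
    (hσ : Function.Injective σ) (a : A.obj S) (c : C.obj S) :
    (A.tensor C).map hσ (a ⊗ₜ[K] c) = A.map hσ a ⊗ₜ[K] C.map hσ c := rfl

noncomputable def tensorIncludeLeft : FIAlgHom A (A.tensor C) where
  app _ _ := Algebra.TensorProduct.includeLeft
  naturality hσ a := by
    change _ ⊗ₜ[K] _ = (A.tensor C).map hσ (a ⊗ₜ[K] 1)
    rw [tensor_map_tmul, map_one]

noncomputable def tensorIncludeRight : FIAlgHom C (A.tensor C) where
  app _ _ := Algebra.TensorProduct.includeRight
  naturality hσ c := by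
    change _ ⊗ₜ[K] _ = (A.tensor C).map hσ (1 ⊗ₜ[K] c)
    rw [tensor_map_tmul, map_one]

theorem generates_tensor {DA : Set (FIElem A)} {DC : Set (FIElem C)} (hA : Generates A DA)
    (hC : Generates C DC) :
    Generates (A.tensor C)
      ((A.tensorIncludeLeft C).mapElem '' DA ∪ (A.tensorIncludeRight C).mapElem '' DC) := by
  intro P hP S _ x
  have hleft := hA.app_mem _ P fun e he ↦ hP _ (.inl ⟨e, he, rfl⟩)
  have hright := hC.app_mem _ P fun e he ↦ hP _ (.inr ⟨e, he, rfl⟩)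
  induction x using TensorProduct.induction_on with
  | zero => exact (P.carrier S).zero_mem
  | tmul a c =>
    rw [← mul_one a, ← one_mul c, ← Algebra.TensorProduct.tmul_mul_tmul]
    exact (P.carrier S).mul_mem (hleft S a) (hright S c)
  | add x y hx hy => exact (P.carrier S).add_mem hx hy

end FIAlgebra

/-- If `A` is generated by finitely many elements of width at most `d` and `C` is
generated by finitely many elements of width at most `d'`, then `S ↦ A(S) ⊗ C(S)`
is generated by finitely many elements of width at most `max d d'`. -/
theorem tensor_finitely_generated_width (A C : FIAlgebra K) (d d' : ℕ)
    (hA : ∃ D : Set (FIElem A), D.Finite ∧ Generates A D ∧ ∀ e ∈ D, WidthLE A e d)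
    (hC : ∃ D : Set (FIElem C), D.Finite ∧ Generates C D ∧ ∀ e ∈ D, WidthLE C e d') :
    ∃ D : Set (FIElem (A.tensor C)), D.Finite ∧ Generates (A.tensor C) D ∧
      ∀ e ∈ D, WidthLE (A.tensor C) e (max d d') := by
  obtain ⟨DA, hDA_fin, hDA_gen, hDA_width⟩ := hA
  obtain ⟨DC, hDC_fin, hDC_gen, hDC_width⟩ := hC
  refine ⟨_, (hDA_fin.image _).union (hDC_fin.image _), A.generates_tensor C hDA_gen hDC_gen, ?_⟩
  rintro _ (⟨e, he, rfl⟩ | ⟨e, he, rfl⟩)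
  · exact (A.tensorIncludeLeft C).widthLE_mapElem ((hDA_width e he).mono (le_max_left d d'))
  · exact (A.tensorIncludeRight C).widthLE_mapElem ((hDC_width e he).mono (le_max_right d d'))
end

section
/- Let K be a Noetherian commutative ring and k a nonnegative integer. The polynomial ring R = K[x_{i,j} : i ∈ [k], j ∈ ℕ], with the action of the group Sym(∞) of finitely-supported permutations of ℕ given by σ·x_{i,j} = x_{i,σ(j)}, satisfies the ascending chain condition on Sym(∞)-stable ideals. -/
/-!
Order the monomials of `R[x_{i,j}]` lexicographically, with `x_{i,j} < x_{i',j'}` iff `i < i'`,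
or `i = i'` and `j > j'`. Relabelling the columns by a strictly increasing map preserves this
order, so it carries leading monomials to leading monomials; and on the finitely many columns
occurring in a polynomial, such a relabelling agrees with a finitary permutation.

Suppose `J₀ < J₁ < ⋯` were stable ideals and pick `f t ∈ J (t+1) \ J t` of minimal degree.
Reading a monomial as the word of its columns, Higman's lemma gives a subsequence whose leading
monomials divide each other up to increasing relabellings of columns, and noetherianity of `R`
makes some leading coefficient a combination of the earlier ones. Lifting the earlier
polynomials to the later leading monomial and cancelling leading terms yields an element of
`J (t+1) \ J t` of smaller degree, a contradiction.
-/

open MvPolynomial Finsupp MulAction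
open scoped MonomialOrder

instance {α β : Type*} [LT α] [LT β] [WellFoundedGT α] [WellFoundedGT β] :
    WellFoundedGT (α ×ₗ β) :=
  ⟨Subrelation.wf (fun h => Prod.lex_def.mpr (by simpa [eq_comm] using Prod.Lex.lt_iff.mp h))
    (InvImage.wf ofLex (wellFounded_gt.prod_lex wellFounded_gt))⟩

theorem Finsupp.toLex_mapDomain_lt_toLex_mapDomain {α β M : Type*} [LinearOrder α]
    [Preorder β] [AddCommMonoid M] [LT M] {G : α → β} (hG : StrictMono G) {a b : α →₀ M}
    (h : toLex a < toLex b) : toLex (a.mapDomain G) < toLex (b.mapDomain G) := by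
  obtain ⟨i, hlt, hi⟩ := Finsupp.Lex.lt_iff.mp h
  refine Finsupp.Lex.lt_iff.mpr ⟨G i, fun y hy => ?_, ?_⟩
  · by_cases hy' : y ∈ Set.range G
    · obtain ⟨x, rfl⟩ := hy'
      simp only [ofLex_toLex, mapDomain_apply hG.injective]
      exact hlt x (hG.lt_iff_lt.mp hy)
    · simp only [ofLex_toLex, mapDomain_of_notMem_range _ _ hy']
  · simpa only [ofLex_toLex, mapDomain_apply hG.injective] using hi

theorem Finsupp.toLex_mapDomain_le_toLex_mapDomain {α β M : Type*} [LinearOrder α]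
    [LinearOrder β] [AddCommMonoid M] [PartialOrder M] {G : α → β} (hG : StrictMono G)
    {a b : α →₀ M} (h : toLex a ≤ toLex b) : toLex (a.mapDomain G) ≤ toLex (b.mapDomain G) := by
  rcases h.lt_or_eq with h | h
  · exact (toLex_mapDomain_lt_toLex_mapDomain hG h).le
  · rw [toLex.injective h]

theorem Set.InjOn.exists_perm_eqOn {α : Type*} [DecidableEq α] {f : α → α} {s : Finset α}
    (hf : Set.InjOn f s) : ∃ σ : Equiv.Perm α, (fixedBy α σ)ᶜ.Finite ∧ Set.EqOn σ f s := by
  induction s using Finset.induction_on with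
  | empty => exact ⟨1, by simp, by simp⟩
  | insert a s ha ih =>
    obtain ⟨σ, hfin, hσ⟩ := ih (hf.mono (by simp))
    refine ⟨Equiv.swap (σ a) (f a) * σ,
      ((finite_compl_fixedBy_swap (x := σ a) (y := f a)).union hfin).subset ?_, ?_⟩
    · rw [← Set.compl_inter, Set.compl_subset_compl]
      exact fixedBy_mul α _ _
    · intro x hx
      rcases Finset.mem_insert.mp hx with rfl | hx
      · simp
      have hxa : x ≠ a := ne_of_mem_of_not_mem hx ha
      rw [Equiv.Perm.mul_apply, hσ hx, Equiv.swap_apply_of_ne_of_ne]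
      · rw [← hσ hx]
        exact σ.injective.ne hxa
      · exact hf.ne (by simp [hx]) (by simp) hxa

theorem MvPolynomial.rename_congr_vars {σ τ R : Type*} [CommSemiring R] {f g : σ → τ}
    {p : MvPolynomial σ R} (h : ∀ i ∈ p.vars, f i = g i) : rename f p = rename g p :=
  hom_congr_vars (f₁ := (rename f).toRingHom) (f₂ := (rename g).toRingHom) (by ext; simp)
    (fun i hi _ => by simp [h i hi]) rfl

theorem exists_sum_mul_eq_of_isNoetherianRing {R : Type*} [CommRing R] [IsNoetherianRing R]
    (c : ℕ → R) : ∃ n, ∃ a : Fin n → R, ∑ i, a i * c i = c n := by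
  let I : ℕ →o Ideal R := ⟨fun n => Ideal.span (Set.range fun i : Fin n => c i), fun m n h =>
    Ideal.span_mono (Set.range_subset_iff.mpr fun i => ⟨Fin.castLE h i, rfl⟩)⟩
  obtain ⟨n, hn⟩ := WellFoundedGT.monotone_chain_condition I
  have hc : c n ∈ I (n + 1) := Ideal.subset_span ⟨Fin.last n, rfl⟩
  rw [← hn (n + 1) n.le_succ] at hc
  obtain ⟨a, ha⟩ := (Submodule.mem_span_range_iff_exists_fun R).mp hc
  exact ⟨n, a, ha⟩

namespace MonomialOrder

variable {σ τ R : Type*}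

noncomputable def domCongr (m : MonomialOrder τ) (e : σ ≃ τ) : MonomialOrder σ where
  syn := m.syn
  toSyn := (Finsupp.domCongr e).trans m.toSyn
  toSyn_monotone a b h := m.toSyn_monotone (show Finsupp.domCongr e a ≤ Finsupp.domCongr e b from
    fun x => by simpa only [Finsupp.domCongr_apply, equivMapDomain_apply] using h (e.symm x))

section CommSemiring

variable [CommSemiring R] (m : MonomialOrder σ) {e : σ → σ}

theorem degree_rename_of_monotone (he : Function.Injective e)
    (hmono : ∀ a b, a ≼[m] b → a.mapDomain e ≼[m] b.mapDomain e) (f : MvPolynomial σ R) :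
    m.degree (rename e f) = (m.degree f).mapDomain e := by
  classical
  rcases eq_or_ne f 0 with rfl | hf
  · simp
  apply m.toSyn.injective
  apply le_antisymm
  · rw [degree_le_iff, support_rename_of_injective he]
    intro _ hc
    obtain ⟨c, hcf, rfl⟩ := Finset.mem_image.mp hc
    exact hmono _ _ (m.le_degree hcf)
  · apply m.le_degree
    rw [MvPolynomial.mem_support_iff, coeff_rename_mapDomain e he]
    exact m.coeff_degree_ne_zero_iff.mpr hf

theorem leadingCoeff_rename_of_monotone (he : Function.Injective e)
    (hmono : ∀ a b, a ≼[m] b → a.mapDomain e ≼[m] b.mapDomain e) (f : MvPolynomial σ R) :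
    m.leadingCoeff (rename e f) = m.leadingCoeff f := by
  rw [leadingCoeff, m.degree_rename_of_monotone he hmono, coeff_rename_mapDomain e he,
    leadingCoeff]

end CommSemiring

theorem degree_sub_sum_smul_lt [CommRing R] (m : MonomialOrder σ) {ι : Type*} (s : Finset ι)
    {f : MvPolynomial σ R} {q : ι → MvPolynomial σ R} (a : ι → R)
    (hq : ∀ i ∈ s, m.degree (q i) = m.degree f)
    (hlc : ∑ i ∈ s, a i * m.leadingCoeff (q i) = m.leadingCoeff f)
    (hne : f - ∑ i ∈ s, a i • q i ≠ 0) :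
    m.degree (f - ∑ i ∈ s, a i • q i) ≺[m] m.degree f := by
  have hle : m.degree (f - ∑ i ∈ s, a i • q i) ≼[m] m.degree f :=
    degree_sub_le.trans (sup_le le_rfl (degree_sum_le.trans (Finset.sup_le fun i hi =>
      degree_smul_le.trans (congrArg m.toSyn (hq i hi)).le)))
  have hcoeff : (f - ∑ i ∈ s, a i • q i).coeff (m.degree f) = 0 := by
    rw [coeff_sub, coeff_sum, ← leadingCoeff, ← hlc, sub_eq_zero]
    refine Finset.sum_congr rfl fun i hi => ?_
    rw [coeff_smul, ← hq i hi, smul_eq_mul, leadingCoeff]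
  refine hle.lt_of_ne fun h => hne ?_
  rwa [← m.coeff_degree_eq_zero_iff, m.toSyn.injective h]

end MonomialOrder

namespace CAHS

variable {ι R : Type*}

section ColumnLex

variable (ι) [LinearOrder ι]

/-- Columns are reversed because `MonomialOrder.lex` needs variables well-founded from above. -/
def varEquiv : ι × ℕ ≃ ι ×ₗ ℕᵒᵈ := (Equiv.prodCongr (.refl ι) OrderDual.toDual).trans toLex

noncomputable def colLex [WellFoundedGT ι] : MonomialOrder (ι × ℕ) :=
  MonomialOrder.lex.domCongr (varEquiv ι)

variable {ι}

theorem strictMono_varEquiv_conj {π : ℕ → ℕ} (hπ : StrictMono π) :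
    StrictMono (varEquiv ι ∘ Prod.map id π ∘ (varEquiv ι).symm) := by
  intro x y h
  rw [Prod.Lex.lt_iff] at h ⊢
  rcases h with h | ⟨h₁, h₂⟩
  · exact Or.inl h
  · exact Or.inr ⟨h₁, hπ h₂⟩

variable [WellFoundedGT ι]

theorem colLex_toSyn_mapDomain {π : ℕ → ℕ} (c : ι × ℕ →₀ ℕ) :
    (colLex ι).toSyn (c.mapDomain (Prod.map id π)) =
      toLex ((ofLex ((colLex ι).toSyn c)).mapDomain
        (varEquiv ι ∘ Prod.map id π ∘ (varEquiv ι).symm)) := by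
  change toLex (Finsupp.domCongr _ _) = toLex (mapDomain _ (Finsupp.domCongr _ _))
  simp only [Finsupp.domCongr_apply, equivMapDomain_eq_mapDomain, ← mapDomain_comp]
  congr 2

theorem colLex_mapDomain_le {π : ℕ → ℕ} (hπ : StrictMono π) {a b : ι × ℕ →₀ ℕ}
    (h : a ≼[colLex ι] b) :
    a.mapDomain (Prod.map id π) ≼[colLex ι] b.mapDomain (Prod.map id π) := by
  rw [colLex_toSyn_mapDomain, colLex_toSyn_mapDomain]
  exact toLex_mapDomain_le_toLex_mapDomain (strictMono_varEquiv_conj hπ) h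

variable [CommSemiring R] {π : ℕ → ℕ}

theorem colLex_degree_rename (hπ : StrictMono π) (f : MvPolynomial (ι × ℕ) R) :
    (colLex ι).degree (rename (Prod.map id π) f) =
      ((colLex ι).degree f).mapDomain (Prod.map id π) :=
  (colLex ι).degree_rename_of_monotone (Function.injective_id.prodMap hπ.injective)
    (fun _ _ => colLex_mapDomain_le hπ) f

theorem colLex_leadingCoeff_rename (hπ : StrictMono π) (f : MvPolynomial (ι × ℕ) R) :
    (colLex ι).leadingCoeff (rename (Prod.map id π) f) = (colLex ι).leadingCoeff f :=
  (colLex ι).leadingCoeff_rename_of_monotone (Function.injective_id.prodMap hπ.injective)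
    (fun _ _ => colLex_mapDomain_le hπ) f

end ColumnLex

section Higman

def IncDvd (u v : ι × ℕ →₀ ℕ) : Prop :=
  ∃ π : ℕ → ℕ, StrictMono π ∧ u.mapDomain (Prod.map id π) ≤ v

noncomputable def columns (u : ι × ℕ →₀ ℕ) : List (ι → ℕ) :=
  (List.range (u.support.sup Prod.snd + 1)).map fun j i => u (i, j)

theorem apply_eq_zero_of_length_columns_le {u : ι × ℕ →₀ ℕ} {i : ι} {j : ℕ}
    (hj : (columns u).length ≤ j) : u (i, j) = 0 := by
  simp only [columns, List.length_map, List.length_range] at hj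
  by_contra h
  have := Finset.le_sup (f := Prod.snd) (Finsupp.mem_support_iff.mpr h)
  omega

theorem incDvd_of_sublistForall₂ {u v : ι × ℕ →₀ ℕ}
    (h : List.SublistForall₂ (· ≤ ·) (columns u) (columns v)) : IncDvd u v := by
  obtain ⟨l, hul, hlv⟩ := List.sublistForall₂_iff.mp h
  obtain ⟨π, hπ⟩ := List.sublist_iff_exists_orderEmbedding_getElem?_eq.mp hlv
  have hinj : Function.Injective (Prod.map (id : ι → ι) π) :=
    Function.injective_id.prodMap π.injective
  refine ⟨π, π.strictMono, fun x => ?_⟩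
  by_cases hx : x ∈ Set.range (Prod.map id π)
  swap
  · simp [mapDomain_of_notMem_range _ _ hx]
  obtain ⟨⟨i, j⟩, rfl⟩ := hx
  rw [mapDomain_apply hinj]
  by_cases hj : j < (columns u).length
  · have hjl : j < l.length := hul.length_eq ▸ hj
    have h1 : (columns u)[j] ≤ l[j] := hul.get hj hjl
    have h2 : l[j]? = (columns v)[π j]? := hπ j
    rw [List.getElem?_eq_getElem hjl] at h2
    simp only [columns, List.getElem?_map, List.getElem_map, List.getElem_range] at h1 h2
    rcases lt_or_ge (π j) (v.support.sup Prod.snd + 1) with hv | hv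
    · rw [List.getElem?_range hv, Option.map_some, Option.some_inj] at h2
      simpa [h2] using h1 i
    · simp [List.getElem?_eq_none, hv] at h2
  · rw [apply_eq_zero_of_length_columns_le (not_lt.mp hj)]
    exact Nat.zero_le _

theorem exists_subseq_incDvd [Finite ι] (u : ℕ → ι × ℕ →₀ ℕ) :
    ∃ φ : ℕ ↪o ℕ, ∀ m n, m ≤ n → IncDvd (u (φ m)) (u (φ n)) := by
  have hpwo := (Set.isPWO_of_wellQuasiOrderedLE (Set.univ : Set (ι → ℕ)))
    |>.partiallyWellOrderedOn_sublistForall₂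
  have : IsPreorder (List (ι → ℕ)) (List.SublistForall₂ (· ≤ ·)) := {}
  obtain ⟨φ, hφ⟩ := hpwo.exists_monotone_subseq (f := fun n => columns (u n)) fun _ _ _ => trivial
  exact ⟨φ, fun m n h => incDvd_of_sublistForall₂ (hφ m n h)⟩

end Higman

section Lifting

variable [CommSemiring R]

theorem exists_perm_rename_prodMap_eq {π : ℕ → ℕ} (hπ : Function.Injective π)
    (p : MvPolynomial (ι × ℕ) R) : ∃ σ : Equiv.Perm ℕ, (fixedBy ℕ σ)ᶜ.Finite ∧
      rename (Prod.map id σ) p = rename (Prod.map id π) p := by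
  classical
  obtain ⟨σ, hfin, hσ⟩ := (hπ.injOn (s := p.vars.image Prod.snd)).exists_perm_eqOn
  exact ⟨σ, hfin, rename_congr_vars fun x hx => Prod.ext rfl (hσ (Finset.mem_image_of_mem _ hx))⟩

theorem exists_mem_span_rename_degree_eq [LinearOrder ι] [WellFoundedGT ι]
    {f : MvPolynomial (ι × ℕ) R} (hf : f ≠ 0) {v : ι × ℕ →₀ ℕ}
    (h : IncDvd ((colLex ι).degree f) v) :
    ∃ σ : Equiv.Perm ℕ, (fixedBy ℕ σ)ᶜ.Finite ∧ ∃ q ∈ Ideal.span {rename (Prod.map id σ) f},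
      (colLex ι).degree q = v ∧ (colLex ι).leadingCoeff q = (colLex ι).leadingCoeff f := by
  classical
  have : Nontrivial R := nontrivial_of_ne _ _ ((colLex ι).leadingCoeff_ne_zero_iff.mpr hf)
  obtain ⟨π, hπ, hle⟩ := h
  obtain ⟨w, rfl⟩ := exists_add_of_le hle
  obtain ⟨σ, hσfin, hσ⟩ := exists_perm_rename_prodMap_eq hπ.injective f
  have hreg : IsRegular ((colLex ι).leadingCoeff (monomial w (1 : R))) := by
    simpa [MonomialOrder.leadingCoeff_monomial] using isRegular_one
  have hrename : rename (Prod.map id π) f ≠ 0 :=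
    (map_ne_zero_iff _ (rename_injective _ (Function.injective_id.prodMap hπ.injective))).mpr hf
  refine ⟨σ, hσfin, monomial w 1 * rename (Prod.map id σ) f,
    Ideal.mul_mem_left _ _ (Ideal.subset_span rfl), ?_, ?_⟩
  · rw [hσ, MonomialOrder.degree_mul_of_isRegular_left hreg hrename, colLex_degree_rename hπ,
      MonomialOrder.degree_monomial, if_neg one_ne_zero, add_comm]
  · rw [hσ, MonomialOrder.leadingCoeff_mul_of_isRegular_left hreg, colLex_leadingCoeff_rename hπ,
      MonomialOrder.leadingCoeff_monomial, one_mul]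

end Lifting

def IsSymStable [CommSemiring R] (I : Ideal (MvPolynomial (ι × ℕ) R)) : Prop :=
  ∀ σ : Equiv.Perm ℕ, (fixedBy ℕ σ)ᶜ.Finite → ∀ f ∈ I, rename (Prod.map id σ) f ∈ I

variable [LinearOrder ι] [Finite ι] [CommRing R] [IsNoetherianRing R]

theorem not_strictMono_of_isSymStable
    (J : ℕ → Ideal (MvPolynomial (ι × ℕ) R)) (hJ : ∀ n, IsSymStable (J n)) : ¬ StrictMono J := by
  intro hmono
  set m := colLex ι
  have hne (t : ℕ) : {p | p ∈ J (t + 1) ∧ p ∉ J t}.Nonempty :=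
    SetLike.exists_of_lt (hmono t.lt_succ_self)
  let f t := Function.argminOn (fun p => m.toSyn (m.degree p)) _ (hne t)
  have hf (t : ℕ) : f t ∈ {p | p ∈ J (t + 1) ∧ p ∉ J t} := Function.argminOn_mem _ _ _
  have hfmin (t : ℕ) p (hp : p ∈ {p | p ∈ J (t + 1) ∧ p ∉ J t}) :
      ¬ m.toSyn (m.degree p) < m.toSyn (m.degree (f t)) :=
    Function.not_lt_argminOn (fun p => m.toSyn (m.degree p)) _ hp
  have hf0 (t : ℕ) : f t ≠ 0 := fun h => (hf t).2 (h ▸ (J t).zero_mem)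
  obtain ⟨φ, hφ⟩ := exists_subseq_incDvd fun t => m.degree (f t)
  obtain ⟨n, a, ha⟩ := exists_sum_mul_eq_of_isNoetherianRing fun t => m.leadingCoeff (f (φ t))
  have hlift (i : Fin n) : ∃ q ∈ J (φ n), m.degree q = m.degree (f (φ n)) ∧
      m.leadingCoeff q = m.leadingCoeff (f (φ i)) := by
    obtain ⟨σ, hσ, q, hq, hdeg, hlc⟩ := exists_mem_span_rename_degree_eq (hf0 _) (hφ i n i.2.le)
    have hJ' : J (φ i + 1) ≤ J (φ n) := hmono.monotone (φ.strictMono i.2)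
    exact ⟨q, (Ideal.span_singleton_le_iff_mem _).mpr (hJ _ σ hσ _ (hJ' (hf _).1)) hq, hdeg, hlc⟩
  choose q hqJ hqdeg hqlc using hlift
  have hsum : ∑ i, a i • q i ∈ J (φ n) :=
    Ideal.sum_mem _ fun i _ => Submodule.smul_of_tower_mem _ _ (hqJ i)
  have hg : f (φ n) - ∑ i, a i • q i ∈ {p | p ∈ J (φ n + 1) ∧ p ∉ J (φ n)} :=
    ⟨sub_mem (hf _).1 (hmono.monotone (φ n).le_succ hsum),
      fun h => (hf _).2 (by simpa using add_mem h hsum)⟩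
  exact hfmin _ _ hg (m.degree_sub_sum_smul_lt _ a (fun i _ => hqdeg i) (by simp [hqlc, ha])
    fun h => hg.2 (h ▸ (J _).zero_mem))

theorem wellFoundedGT_isSymStable :
    WellFoundedGT {I : Ideal (MvPolynomial (ι × ℕ) R) // IsSymStable I} := by
  rw [WellFoundedGT, isWellFounded_iff, RelEmbedding.wellFounded_iff_isEmpty]
  exact ⟨fun e => not_strictMono_of_isSymStable (fun n => (e n).1) (fun n => (e n).2)
    fun _ _ h => e.map_rel_iff.mpr h⟩

end CAHS

/-- The Cohen–Aschenbrenner–Hillar–Sullivant theorem: over a Noetherian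
commutative ring `K`, the polynomial ring `K[x_{i,j} : i ∈ [k], j ∈ ℕ]` satisfies
the ascending chain condition on ideals stable under the group `Sym(∞)` of
finitely-supported permutations of `ℕ`, acting by `σ · x_{i,j} = x_{i,σ(j)}`. -/
theorem sym_noetherianity (K : Type*) [CommRing K] [IsNoetherianRing K] (k : ℕ)
    (I : ℕ → Ideal (MvPolynomial (Fin k × ℕ) K))
    (hmono : Monotone I)
    (hstab : ∀ (n : ℕ) (σ : Equiv.Perm ℕ), {j : ℕ | σ j ≠ j}.Finite →
      ∀ f ∈ I n, MvPolynomial.rename (Prod.map id σ) f ∈ I n) :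
    ∃ N, ∀ m, N ≤ m → I m = I N := by
  obtain ⟨N, hN⟩ := (CAHS.wellFoundedGT_isSymStable (ι := Fin k) (R := K)).monotone_chain_condition
    ⟨fun n => ⟨I n, hstab n⟩, hmono⟩
  exact ⟨N, fun m hm => congrArg Subtype.val (hN m hm).symm⟩
end

section
/- Let K be a field and consider the k-factor model map: for a finite set S, send a pair (A, D) with A ∈ K^{S × [k]} and D ∈ K^S to the symmetric matrix Σ ∈ K^{S × S} with Σ_{ij} = Σ_{m=1}^{k} A_{im} A_{jm} + δ_{ij} D_i. Then every off-diagonal (k+2)×(k+2) minor of Σ vanishes, i.e., for any rows i₁,…,i_{k+2} and columns j₁,…,j_{k+2} with all of i₁,…,i_{k+2}, j₁,…,j_{k+2} pairwise distinct, the determinant of the submatrix (Σ_{i_a j_b})_{a,b} is zero. -/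
/-!
Off the diagonal, `Σ` agrees with `A Aᵀ`, so a minor whose rows and columns are disjoint is a
minor of `A Aᵀ`. That minor factors through `Kᵏ`, hence has rank at most `k < k + 2`.
-/

namespace Matrix

variable {l m n R : Type*} [Fintype m] [Fintype n] [DecidableEq n] [CommRing R] [IsDomain R]

theorem det_mul_eq_zero_of_card_lt (B : Matrix n m R) (C : Matrix m n R)
    (h : Fintype.card m < Fintype.card n) : (B * C).det = 0 := by
  by_contra hdet
  have hrank : (B * C).rank = Fintype.card n := rank_of_det_ne_zero hdet
  have := (rank_mul_le_left B C).trans (rank_le_card_width B)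
  omega

theorem det_submatrix_mul_eq_zero_of_card_lt (B : Matrix l m R) (C : Matrix m l R)
    (r c : n → l) (h : Fintype.card m < Fintype.card n) :
    ((B * C).submatrix r c).det = 0 := by
  rw [submatrix_mul _ _ r id c Function.bijective_id]
  exact det_mul_eq_zero_of_card_lt _ _ h

end Matrix

theorem factor_model_offdiag_minors_vanish_general {K S : Type*} [Field K]
    [DecidableEq S] {k : ℕ} (A : S → Fin k → K) (D : S → K)
    (Sig : Matrix S S K)
    (hSig : ∀ i j, Sig i j = (∑ m, A i m * A j m) + if i = j then D i else 0)
    (r c : Fin (k + 2) → S)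
    (hdistinct : Function.Injective (Sum.elim r c : Fin (k + 2) ⊕ Fin (k + 2) → S)) :
    (Matrix.of fun a b => Sig (r a) (c b)).det = 0 := by
  have hoff : ∀ a b, r a ≠ c b := fun a b h => Sum.inl_ne_inr (hdistinct h)
  have hminor : (Matrix.of fun a b => Sig (r a) (c b)) =
      (Matrix.of A * (Matrix.of A).transpose).submatrix r c := by
    ext a b
    simp [hSig, hoff, Matrix.mul_apply]
  rw [hminor]
  exact Matrix.det_submatrix_mul_eq_zero_of_card_lt _ _ r c (by simp)

/-- Off-diagonal minors of the `k`-factor model vanish: if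
`Σ_{ij} = Σ_{m} A_{im} A_{jm} + δ_{ij} D_i`, then for any rows `i₁,…,i_{k+2}`
and columns `j₁,…,j_{k+2}` which are all pairwise distinct, the corresponding
`(k+2) × (k+2)` minor of `Σ` is zero. -/
theorem factor_model_offdiag_minors_vanish {K S : Type*} [Field K] [Fintype S]
    [DecidableEq S] {k : ℕ} (A : S → Fin k → K) (D : S → K)
    (Sig : Matrix S S K)
    (hSig : ∀ i j, Sig i j = (∑ m, A i m * A j m) + if i = j then D i else 0)
    (r c : Fin (k + 2) → S)
    (hdistinct : Function.Injective (Sum.elim r c : Fin (k + 2) ⊕ Fin (k + 2) → S)) :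
    (Matrix.of fun a b => Sig (r a) (c b)).det = 0 :=
  factor_model_offdiag_minors_vanish_general A D Sig hSig r c hdistinct
end
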